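/- arXiv:2512.21664 — 4 statements merged into one kernel-verified Lean document; each statement's English description precedes it below -/
import Mathlib

section
/- Let 0 < t < t' < 1. Define e_j(s) as the largest prime ≤ s^{-j} (or 2 if s^{-j} < 2). Then for all sufficiently large v, e_v(t) > e_v(t'). -/
/-!
For `x ≥ 2` let `q(x)` be the largest prime `≤ x`. By Bertrand's postulate there is a prime in
`(q(x), 2 q(x)]`, so `q(x) < q(y)` as soon as `2x ≤ y`. With `x = t'⁻ᵛ` and `y = t⁻ᵛ`, the ratio
`y / x = (t'/t)ᵛ` tends to infinity, so this applies for all large `v`.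
-/

/-- `ee t j` is the largest prime `p` with `(p : ℝ) ≤ t⁻ʲ` if `2 ≤ t⁻ʲ`, and `2` otherwise. -/
noncomputable def ee (t : ℝ) (j : ℕ) : ℕ :=
  if 2 ≤ (t ^ j)⁻¹ then sSup {p : ℕ | p.Prime ∧ (p : ℝ) ≤ (t ^ j)⁻¹} else 2

/-- `ff t j = ∏_{i=1}^j ee t i`. -/
noncomputable def ff (t : ℝ) (j : ℕ) : ℕ := ∏ i ∈ Finset.Icc 1 j, ee t i

open Filter

lemma bddAbove_setOf_prime_le (x : ℝ) : BddAbove {p : ℕ | p.Prime ∧ (p : ℝ) ≤ x} :=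
  ⟨⌊x⌋₊, fun _ hp => Nat.le_floor hp.2⟩

lemma sSup_setOf_prime_le_mem {x : ℝ} (hx : 2 ≤ x) :
    sSup {p : ℕ | p.Prime ∧ (p : ℝ) ≤ x} ∈ {p : ℕ | p.Prime ∧ (p : ℝ) ≤ x} :=
  Nat.sSup_mem ⟨2, Nat.prime_two, by exact_mod_cast hx⟩ (bddAbove_setOf_prime_le x)

lemma sSup_setOf_prime_le_lt_of_two_mul_le {x y : ℝ} (hx : 2 ≤ x) (hxy : 2 * x ≤ y) :
    sSup {p : ℕ | p.Prime ∧ (p : ℝ) ≤ x} < sSup {p : ℕ | p.Prime ∧ (p : ℝ) ≤ y} := by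
  set q := sSup {p : ℕ | p.Prime ∧ (p : ℝ) ≤ x}
  obtain ⟨hq, hqx⟩ := sSup_setOf_prime_le_mem hx
  obtain ⟨p, hp, hqp, hpq⟩ := Nat.exists_prime_lt_and_le_two_mul q hq.ne_zero
  have hpy : (p : ℝ) ≤ y :=
    calc (p : ℝ) ≤ 2 * q := by exact_mod_cast hpq
      _ ≤ 2 * x := by gcongr
      _ ≤ y := hxy
  exact hqp.trans_le (le_csSup (bddAbove_setOf_prime_le y) ⟨hp, hpy⟩)

lemma eventually_two_mul_pow_le_pow {a b : ℝ} (ha : 0 < a) (hab : a < b) :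
    ∀ᶠ n : ℕ in atTop, 2 * a ^ n ≤ b ^ n := by
  have hratio := tendsto_pow_atTop_atTop_of_one_lt ((one_lt_div ha).mpr hab)
  filter_upwards [hratio.eventually_ge_atTop 2] with n hn
  calc 2 * a ^ n ≤ (b / a) ^ n * a ^ n := by gcongr
    _ = b ^ n := by rw [div_pow, div_mul_cancel₀ _ (pow_pos ha n).ne']

theorem ee_eventually_gt (t t' : ℝ) (h0 : 0 < t) (htt' : t < t') (h1 : t' < 1) :
    ∀ᶠ v in Filter.atTop, ee t' v < ee t v := by
  have h0' : 0 < t' := h0.trans htt'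
  have hbig : ∀ᶠ v : ℕ in atTop, 2 ≤ t'⁻¹ ^ v :=
    (tendsto_pow_atTop_atTop_of_one_lt ((one_lt_inv₀ h0').mpr h1)).eventually_ge_atTop 2
  filter_upwards [hbig, eventually_two_mul_pow_le_pow (inv_pos.mpr h0') (inv_strictAnti₀ h0 htt')]
    with v hx hxy
  rw [inv_pow] at hx
  rw [inv_pow, inv_pow] at hxy
  rw [ee, ee, if_pos hx, if_pos (by linarith)]
  exact sSup_setOf_prime_le_lt_of_two_mul_le hx hxy
end

section
/- Every infinite-dimensional Banach space contains a linearly independent family of vectors of cardinality of the continuum. -/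
/-!
Pick a biorthogonal sequence `(xₙ, fₙ)` with `‖xₙ‖ = 1` (Hahn–Banach and infinite dimension let
each new pair be chosen orthogonal to all earlier ones), and an almost disjoint family `(N_σ)` of
continuum many infinite subsets of `ℕ`. The vectors `y_σ = ∑_{n ∈ N_σ} 2⁻ⁿ xₙ` converge by
completeness, and `fₘ y_σ = 2⁻ᵐ` or `0` according as `m ∈ N_σ`. Given finitely many distinct `σ`,
some `m ∈ N_σ` lies in none of the other `N_τ`, so applying `fₘ` to a vanishing linear combination
kills every coefficient but that of `y_σ`.
-/

open Set Function Cardinal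

theorem LinearMap.finiteDimensional_of_ker_le {K V W : Type*} [Field K] [AddCommGroup V]
    [Module K V] [AddCommGroup W] [Module K W] [FiniteDimensional K W] (L : V →ₗ[K] W)
    {S : Submodule K V} [FiniteDimensional K S] (h : LinearMap.ker L ≤ S) :
    FiniteDimensional K V :=
  have := Submodule.finiteDimensional_of_le h
  have := Module.Finite.equiv L.quotKerEquivRange.symm
  Module.Finite.of_submodule_quotient (LinearMap.ker L)

section Biorthogonal

variable {𝕜 E : Type*} [RCLike 𝕜] [NormedAddCommGroup E] [NormedSpace 𝕜 E]

theorem Submodule.exists_strongDual_eq_one_of_notMem (S : Submodule 𝕜 E) [FiniteDimensional 𝕜 S]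
    {x : E} (hx : x ∉ S) : ∃ g : StrongDual 𝕜 E, g x = 1 ∧ ∀ y ∈ S, g y = 0 := by
  obtain ⟨π, hπ⟩ := Submodule.ClosedComplemented.of_finiteDimensional S
  set P : E →L[𝕜] E := .id 𝕜 E - S.subtypeL.comp π
  have hPx : P x ≠ 0 := fun h ↦ hx <| by
    rw [show x = π x from sub_eq_zero.mp h]
    exact (π x).2
  obtain ⟨g, hg⟩ := SeparatingDual.exists_eq_one (R := 𝕜) hPx
  exact ⟨g.comp P, hg, fun y hy ↦ by simp [P, hπ ⟨y, hy⟩]⟩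

theorem exists_dual_pair_orthogonal_to_finset (hE : ¬ FiniteDimensional 𝕜 E)
    (s : Finset (E × StrongDual 𝕜 E)) :
    ∃ p : E × StrongDual 𝕜 E, (‖p.1‖ = 1 ∧ p.2 p.1 = 1) ∧ ∀ q ∈ s, q.2 p.1 = 0 ∧ p.2 q.1 = 0 := by
  set S := Submodule.span 𝕜 (Prod.fst '' (s : Set (E × StrongDual 𝕜 E)))
  have : FiniteDimensional 𝕜 S := FiniteDimensional.span_of_finite 𝕜 (s.finite_toSet.image _)
  let L : E →ₗ[𝕜] (s → 𝕜) := LinearMap.pi fun q ↦ (q.1.2 : E →ₗ[𝕜] 𝕜)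
  obtain ⟨v, hvL, hvS⟩ : ∃ v ∈ LinearMap.ker L, v ∉ S :=
    SetLike.not_le_iff_exists.mp fun h ↦ hE (L.finiteDimensional_of_ker_le h)
  have hv : v ≠ 0 := fun h ↦ hvS (h ▸ S.zero_mem)
  obtain ⟨g, hgv, hgS⟩ := S.exists_strongDual_eq_one_of_notMem hvS
  refine ⟨((‖v‖ : 𝕜)⁻¹ • v, (‖v‖ : 𝕜) • g), ⟨?_, ?_⟩, fun q hq ↦ ⟨?_, ?_⟩⟩
  · simp [norm_smul, hv]
  · simp [hgv, hv]
  · rw [map_smul, show q.2 v = 0 from congr_fun hvL ⟨q, hq⟩, smul_zero]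
  · simp [hgS q.1 (Submodule.subset_span ⟨q, hq, rfl⟩)]

theorem exists_biorthogonal_seq (hE : ¬ FiniteDimensional 𝕜 E) :
    ∃ (x : ℕ → E) (f : ℕ → StrongDual 𝕜 E),
      (∀ n, ‖x n‖ = 1) ∧ ∀ i j, f i (x j) = if i = j then 1 else 0 := by
  let r (p q : E × StrongDual 𝕜 E) : Prop := p.2 q.1 = 0 ∧ q.2 p.1 = 0
  have : Std.Symm r := ⟨fun _ _ h ↦ h.symm⟩
  obtain ⟨p, hp, hpr⟩ := exists_seq_of_forall_finset_exists' _ r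
    fun s _ ↦ exists_dual_pair_orthogonal_to_finset hE s
  refine ⟨fun n ↦ (p n).1, fun n ↦ (p n).2, fun n ↦ (hp n).1, fun i j ↦ ?_⟩
  split_ifs with h
  · exact h ▸ (hp i).2
  · exact (hpr h).1

end Biorthogonal

theorem Set.exists_mem_forall_notMem_of_finite_inter {ι α : Type*} {N : ι → Set α} {i : ι}
    (hi : (N i).Infinite) {s : Finset ι} (hs : ∀ j ∈ s, j ≠ i → (N i ∩ N j).Finite) :
    ∃ m ∈ N i, ∀ j ∈ s, j ≠ i → m ∉ N j := by
  have hfin : (⋃ j ∈ (s : Set ι) \ {i}, N i ∩ N j).Finite :=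
    s.finite_toSet.sdiff.biUnion fun j hj ↦ hs j hj.1 hj.2
  obtain ⟨m, hm, hmU⟩ := (hi.sdiff hfin).nonempty
  exact ⟨m, hm, fun j hj hji hmj ↦ hmU (mem_biUnion ⟨hj, hji⟩ ⟨hm, hmj⟩)⟩

section AlmostDisjointSums

variable {𝕜 E ι : Type*} [NontriviallyNormedField 𝕜] [NormedAddCommGroup E] [NormedSpace 𝕜 E]
  [CompleteSpace E] {x : ℕ → E} {f : ℕ → StrongDual 𝕜 E} {c : ℕ → 𝕜}

theorem apply_tsum_indicator_of_biorthogonal (hxf : ∀ i j, f i (x j) = if i = j then 1 else 0)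
    (hc : Summable fun n ↦ c n • x n) (N : Set ℕ) (m : ℕ) :
    f m (∑' n, N.indicator (fun n ↦ c n • x n) n) = N.indicator c m := by
  rw [(f m).map_tsum (hc.indicator N), tsum_eq_single m]
  · by_cases hm : m ∈ N <;> simp [hm, hxf]
  · intro n hn
    by_cases h : n ∈ N <;> simp [h, hxf, Ne.symm hn]

theorem linearIndependent_tsum_indicator_of_biorthogonal
    (hxf : ∀ i j, f i (x j) = if i = j then 1 else 0) (hc : Summable fun n ↦ c n • x n)
    (hc0 : ∀ n, c n ≠ 0) {N : ι → Set ℕ} (hinf : ∀ i, (N i).Infinite)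
    (hfin : Pairwise fun i j ↦ (N i ∩ N j).Finite) :
    LinearIndependent 𝕜 fun i ↦ ∑' n, (N i).indicator (fun n ↦ c n • x n) n := by
  classical
  rw [linearIndependent_iff']
  intro s g hg i hi
  obtain ⟨m, hmi, hm⟩ := exists_mem_forall_notMem_of_finite_inter (hinf i) (s := s)
    fun j _ hji ↦ hfin hji.symm
  have := congr_arg (f m) hg
  simp only [map_sum, map_smul, apply_tsum_indicator_of_biorthogonal hxf hc, map_zero] at this
  rw [Finset.sum_eq_single i (fun j hj hji ↦ by simp [hm j hj hji]) (absurd hi),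
    indicator_of_mem hmi, smul_eq_mul] at this
  exact (mul_eq_zero.mp this).resolve_right (hc0 m)

end AlmostDisjointSums

/-- Distinct `σ` have equal codes only on their common prefix, so the ranges of `prefixCode σ`
form an almost disjoint family. -/
noncomputable def prefixCode (σ : ℕ → Bool) (n : ℕ) : ℕ :=
  Encodable.encode ((List.range n).map σ)

theorem prefixCode_eq_prefixCode_iff {σ τ : ℕ → Bool} {n m : ℕ} :
    prefixCode σ n = prefixCode τ m ↔ n = m ∧ ∀ i < n, σ i = τ i := by
  refine ⟨fun h ↦ ?_, ?_⟩
  · have h := Encodable.encode_injective h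
    obtain rfl : n = m := by simpa using congr_arg List.length h
    exact ⟨rfl, fun i hi ↦ List.map_inj_left.mp h i (List.mem_range.mpr hi)⟩
  · rintro ⟨rfl, h⟩
    exact congr_arg Encodable.encode <|
      List.map_inj_left.mpr fun i hi ↦ h i (List.mem_range.mp hi)

theorem prefixCode_injective (σ : ℕ → Bool) : Injective (prefixCode σ) :=
  fun _ _ h ↦ (prefixCode_eq_prefixCode_iff.mp h).1

theorem finite_range_prefixCode_inter {σ τ : ℕ → Bool} (h : σ ≠ τ) :
    (range (prefixCode σ) ∩ range (prefixCode τ)).Finite := by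
  obtain ⟨d, hd⟩ := Function.ne_iff.mp h
  refine ((finite_Iic d).image (prefixCode σ)).subset ?_
  rintro _ ⟨⟨n, rfl⟩, m, hm⟩
  refine ⟨n, mem_Iic.mpr (not_lt.mp fun hdn ↦ hd ?_), rfl⟩
  exact (prefixCode_eq_prefixCode_iff.mp hm.symm).2 d hdn

theorem exists_linearIndependent_continuum (𝕜 : Type*) [RCLike 𝕜] (E : Type*)
    [NormedAddCommGroup E] [NormedSpace 𝕜 E] [CompleteSpace E]
    (hE : ¬ FiniteDimensional 𝕜 E) :
    ∃ s : Set E, Cardinal.mk s = Cardinal.continuum ∧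
      LinearIndependent 𝕜 (fun v : s => (v : E)) := by
  obtain ⟨x, f, hx, hxf⟩ := exists_biorthogonal_seq hE
  have hc : Summable fun n ↦ ((2 : 𝕜) ^ n)⁻¹ • x n :=
    .of_norm <| by simpa [norm_smul, hx] using summable_geometric_two
  have hy := linearIndependent_tsum_indicator_of_biorthogonal hxf hc (by simp)
    (fun σ ↦ infinite_range_of_injective (prefixCode_injective σ))
    fun _ _ ↦ finite_range_prefixCode_inter
  refine ⟨_, ?_, (linearIndepOn_id_range_iff hy.injective).mpr hy⟩
  simpa using mk_range_eq_of_injective hy.injective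
end

section
/- Let E be an infinite-dimensional Banach space over ℝ or ℂ. Then there exists a Borel probability measure P on E such that P(M) = 0 for every finite-dimensional linear subspace M of E. -/
/-!
Rescale a linearly independent sequence so that `‖vₙ‖ = 1 / n!` and push Lebesgue measure on
`(0, 1)` forward along the entire curve `γ t = ∑ tⁿ • vₙ`. A finite-dimensional subspace `M`
misses some `v_N`, so a continuous functional `Φ` vanishing on `M` with `Φ v_N ≠ 0` turns `Φ ∘ γ`
into an entire function with a nonzero Taylor coefficient. Its zeros, which contain `γ⁻¹' M`, are
therefore isolated, hence finite in `[0, 1]`.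
-/

open MeasureTheory Filter Set Nat

theorem exists_linearIndependent_nat_of_not_finiteDimensional {K V : Type*} [DivisionRing K]
    [AddCommGroup V] [Module K V] (hV : ¬ FiniteDimensional K V) :
    ∃ e : ℕ → V, LinearIndependent K e := by
  let b := Module.Basis.ofVectorSpace K V
  have : Infinite (Module.Basis.ofVectorSpaceIndex K V) := by
    by_contra hfin
    rw [not_infinite_iff_finite] at hfin
    exact hV (Module.Finite.of_basis b)
  let f := Infinite.natEmbedding (Module.Basis.ofVectorSpaceIndex K V)
  exact ⟨b ∘ f, b.linearIndependent.comp f f.injective⟩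

theorem LinearIndependent.exists_notMem_of_finiteDimensional {ι K V : Type*} [Infinite ι]
    [DivisionRing K] [AddCommGroup V] [Module K V] {e : ι → V} (he : LinearIndependent K e)
    (M : Submodule K V) [FiniteDimensional K M] : ∃ i, e i ∉ M := by
  by_contra! hall
  exact Module.Finite.not_linearIndependent_of_infinite _
    (he.of_comp M.subtype : LinearIndependent K fun i => (⟨e i, hall i⟩ : M))

namespace FormalMultilinearSeries

variable {𝕜 E : Type*} [NontriviallyNormedField 𝕜] [NormedAddCommGroup E] [NormedSpace 𝕜 E]

variable (𝕜) in
/-- The power series `∑ zⁿ • v n`. -/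
noncomputable def ofCoeffs (v : ℕ → E) : FormalMultilinearSeries 𝕜 𝕜 E :=
  fun n => ContinuousMultilinearMap.mkPiRing 𝕜 (Fin n) (v n)

@[simp]
theorem coeff_ofCoeffs (v : ℕ → E) (n : ℕ) : (ofCoeffs 𝕜 v).coeff n = v n := by
  simp [coeff, ofCoeffs]

theorem radius_ofCoeffs_eq_top {v : ℕ → E} (hv : ∀ n, ‖v n‖ ≤ (n ! : ℝ)⁻¹) :
    (ofCoeffs 𝕜 v).radius = ⊤ := by
  refine radius_eq_top_of_summable_norm _ fun r => ?_
  refine .of_nonneg_of_le (fun n => by positivity) (fun n => ?_)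
    (Real.summable_pow_div_factorial r)
  rw [norm_apply_eq_norm_coef, coeff_ofCoeffs, div_eq_inv_mul]
  gcongr
  exact hv n

theorem hasFPowerSeriesOnBall_sum_ofCoeffs [CompleteSpace E] {v : ℕ → E}
    (hv : ∀ n, ‖v n‖ ≤ (n ! : ℝ)⁻¹) :
    HasFPowerSeriesOnBall (ofCoeffs 𝕜 v).sum (ofCoeffs 𝕜 v) 0 ⊤ := by
  have hrad := radius_ofCoeffs_eq_top (𝕜 := 𝕜) hv
  simpa [hrad] using (ofCoeffs 𝕜 v).hasFPowerSeriesOnBall (by simp [hrad])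

end FormalMultilinearSeries

theorem HasFPowerSeriesOnBall.finite_zeros_inter_of_isCompact {𝕜 E : Type*}
    [NontriviallyNormedField 𝕜] [PreconnectedSpace 𝕜] [NormedAddCommGroup E] [NormedSpace 𝕜 E]
    [CompleteSpace E] {f : 𝕜 → E} {p : FormalMultilinearSeries 𝕜 𝕜 E}
    (hf : HasFPowerSeriesOnBall f p 0 ⊤) (hp : p ≠ 0) {K : Set 𝕜} (hK : IsCompact K) :
    ({z | f z = 0} ∩ K).Finite := by
  have hfa : AnalyticOnNhd 𝕜 f univ := fun z _ => hf.analyticAt_of_mem (by simp)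
  rcases hfa.eqOn_zero_or_eventually_ne_zero_of_preconnected isPreconnected_univ with
    hzero | hne
  · rw [show f = 0 from funext fun z => hzero (mem_univ z)] at hf
    exact absurd hf.hasFPowerSeriesAt.eq_zero hp
  · convert hK.finite_sdiff_of_mem_codiscreteWithin (codiscreteWithin_mono (subset_univ K) hne)
      using 1
    ext z
    simp [and_comm]

section RCLike

variable {𝕜 E : Type*} [RCLike 𝕜] [NormedAddCommGroup E] [NormedSpace 𝕜 E]

theorem LinearIndependent.exists_norm_eq {ι : Type*} {e : ι → E} (he : LinearIndependent 𝕜 e)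
    {r : ι → ℝ} (hr : ∀ i, 0 < r i) :
    ∃ v : ι → E, LinearIndependent 𝕜 v ∧ ∀ i, ‖v i‖ = r i := by
  have hc : ∀ i, ((r i / ‖e i‖ : ℝ) : 𝕜) ≠ 0 := fun i => by
    simpa using ⟨(hr i).ne', he.ne_zero i⟩
  refine ⟨(fun i => Units.mk0 _ (hc i)) • e, he.units_smul _, fun i => ?_⟩
  have he_pos := norm_pos_iff.2 (he.ne_zero i)
  simp only [Pi.smul_apply', Units.smul_mk0, norm_smul, RCLike.norm_ofReal]
  rw [abs_of_pos (div_pos (hr i) he_pos), div_mul_cancel₀ _ he_pos.ne']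

theorem Submodule.exists_strongDual_eq_zero_ne_zero {M : Submodule 𝕜 E}
    (hM : IsClosed (M : Set E)) {x : E} (hx : x ∉ M) :
    ∃ Φ : StrongDual 𝕜 E, (∀ y ∈ M, Φ y = 0) ∧ Φ x ≠ 0 := by
  have : IsClosed (M : Set E) := hM
  obtain ⟨g, hg⟩ := SeparatingDual.exists_ne_zero (R := 𝕜)
    (show M.mkQ x ≠ 0 by rwa [ne_eq, mkQ_apply, Quotient.mk_eq_zero])
  exact ⟨g.comp M.mkQL, fun y hy => by simp [(Quotient.mk_eq_zero M).2 hy], hg⟩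

theorem HasFPowerSeriesOnBall.finite_preimage_submodule_inter_of_isCompact [CompleteSpace E]
    {v : ℕ → E} {f : 𝕜 → E} (hf : HasFPowerSeriesOnBall f (.ofCoeffs 𝕜 v) 0 ⊤)
    (hv : LinearIndependent 𝕜 v) (M : Submodule 𝕜 E) [FiniteDimensional 𝕜 M] {K : Set 𝕜}
    (hK : IsCompact K) : ({z | f z ∈ M} ∩ K).Finite := by
  obtain ⟨N, hN⟩ := hv.exists_notMem_of_finiteDimensional M
  obtain ⟨Φ, hΦM, hΦN⟩ :=
    M.exists_strongDual_eq_zero_ne_zero M.closed_of_finiteDimensional hN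
  have hΦv : Φ.compFormalMultilinearSeries (.ofCoeffs 𝕜 v) ≠ 0 := fun h => hΦN <| by
    simpa using
      (congrArg (fun q => q N 1) h : Φ ((FormalMultilinearSeries.ofCoeffs 𝕜 v).coeff N) = 0)
  exact ((Φ.comp_hasFPowerSeriesOnBall hf).finite_zeros_inter_of_isCompact hΦv hK).subset
    fun z hz => ⟨hΦM _ hz.1, hz.2⟩

end RCLike

theorem exists_probability_measure_annihilating_finiteDimensional
    (𝕜 : Type*) [RCLike 𝕜] (E : Type*)
    [NormedAddCommGroup E] [NormedSpace 𝕜 E] [CompleteSpace E]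
    [MeasurableSpace E] [BorelSpace E]
    (hE : ¬ FiniteDimensional 𝕜 E) :
    ∃ P : Measure E, IsProbabilityMeasure P ∧
      ∀ M : Submodule 𝕜 E, FiniteDimensional 𝕜 M → P (M : Set E) = 0 := by
  obtain ⟨e, he⟩ := exists_linearIndependent_nat_of_not_finiteDimensional hE
  obtain ⟨v, hv, hv_norm⟩ :=
    he.exists_norm_eq (r := fun n => (n ! : ℝ)⁻¹) fun n => by positivity
  have hp := FormalMultilinearSeries.hasFPowerSeriesOnBall_sum_ofCoeffs (𝕜 := 𝕜)
    fun n => (hv_norm n).le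
  let γ : ℝ → E := fun t => (FormalMultilinearSeries.ofCoeffs 𝕜 v).sum t
  have hγ : Measurable γ := by
    have : Continuous (FormalMultilinearSeries.ofCoeffs 𝕜 v).sum := by
      simpa only [Metric.eball_top, continuousOn_univ] using hp.continuousOn
    exact (this.comp RCLike.continuous_ofReal).measurable
  have : IsProbabilityMeasure (volume.restrict (Ioo (0 : ℝ) 1)) := ⟨by simp⟩
  refine ⟨(volume.restrict (Ioo 0 1)).map γ, Measure.isProbabilityMeasure_map hγ.aemeasurable,
    fun M hM => ?_⟩
  have hM_meas := M.closed_of_finiteDimensional.measurableSet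
  rw [Measure.map_apply hγ hM_meas, Measure.restrict_apply (hγ hM_meas)]
  have hfin := hp.finite_preimage_submodule_inter_of_isCompact hv M
    ((isCompact_Icc (a := (0 : ℝ)) (b := 1)).image RCLike.continuous_ofReal)
  refine ((hfin.preimage RCLike.ofReal_injective.injOn).subset ?_).measure_zero _
  exact fun t ht => ⟨ht.1, t, Ioo_subset_Icc_self ht.2, rfl⟩
end

section
/- With the paper's construction x : (0,1) → E, t ↦ Σ_{u≥1} x_{f_u(t)}/2^{f_u(t)}, the set closure(Range(x)) \ Range(x) is countable; in particular Range(x) is a Borel subset of E. -/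
/-- The paper's map `x : (0,1) → E`, `t ↦ ∑_{u ≥ 1} x_{f_u(t)} / 2^{f_u(t)}`. -/
noncomputable def paperMap {E : Type*} [NormedAddCommGroup E] [NormedSpace ℝ E]
    (x : ℕ → E) (t : Set.Ioo (0:ℝ) 1) : E :=
  ∑' u : ℕ, if 1 ≤ u then ((2 : ℝ) ^ (ff t u))⁻¹ • x (ff t u) else 0

/-!
The value of the map at `t` depends only on the digit sequence `j ↦ ee t j`, and it does so
continuously for the product topology on `ℕ → ℕ`, because the `u`-th summand has norm at most
`2⁻ᵘ`. Each `ee · j` is locally constant to the left of every `t > 0`, and to the right of `t`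
unless `(t ^ j)⁻¹` is a prime, i.e. unless `t` lies in the countable set `S`; it is eventually
constant to the right in any case, while `ee t 1 → ∞` as `t → 0⁺`. So the extended map is
left-continuous on `(0, 1]`, right-continuous on `(0, 1) \ S`, has right limits on `[0, 1)`
(the limit at `0` being `0`). By compactness of `[0, 1]`, a point of the closure of the range
that is not in the range is the value at `1` or a right limit at `0` or at a point of `S`.
-/

open Filter Topology Set

lemma exists_mapClusterPt_nhdsWithin_of_mem_closure_image {α X : Type*} [TopologicalSpace α]
    [TopologicalSpace X] {K s : Set α} (hK : IsCompact K) (hsK : s ⊆ K) {g : α → X} {y : X}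
    (hy : y ∈ closure (g '' s)) : ∃ t ∈ K, MapClusterPt y (𝓝[s] t) g := by
  have hne : (𝓟 s ⊓ comap g (𝓝 y)).NeBot := by
    rw [neBot_inf_comap_iff_map, map_principal, inf_comm]
    exact mem_closure_iff_clusterPt.1 hy
  obtain ⟨t, htK, ht⟩ :=
    hK.exists_clusterPt (f := 𝓟 s ⊓ comap g (𝓝 y)) (inf_le_left.trans (principal_mono.2 hsK))
  refine ⟨t, htK, ?_⟩
  rw [mapClusterPt_def, ClusterPt, inf_comm, ← neBot_inf_comap_iff_map, nhdsWithin, inf_assoc]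
  exact ht

theorem closure_image_Ioo_diff_subset {X : Type*} [TopologicalSpace X] [T2Space X] [Nonempty X]
    {g : ℝ → X} {a b : ℝ} {T : Set ℝ}
    (hleft : ∀ t ∈ Ioc a b, ContinuousWithinAt g (Iio t) t)
    (hright : ∀ t ∈ Ico a b, ∃ l, Tendsto g (𝓝[>] t) (𝓝 l))
    (hcont : ∀ t ∈ Ioo a b, t ∉ T → ContinuousWithinAt g (Ioi t) t) :
    closure (g '' Ioo a b) \ g '' Ioo a b ⊆
      insert (g b) ((fun t => limUnder (𝓝[>] t) g) '' insert a T) := by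
  rintro y ⟨hy, hy'⟩
  obtain ⟨t, ⟨hat, htb⟩, ht⟩ :=
    exists_mapClusterPt_nhdsWithin_of_mem_closure_image isCompact_Icc Ioo_subset_Icc_self hy
  have hsplit : 𝓝[Ioo a b] t = 𝓝[Ioo a b ∩ Iic t] t ⊔ 𝓝[Ioo a b ∩ Ioi t] t := by
    rw [← nhdsWithin_union, ← inter_union_distrib_left, Iic_union_Ioi, inter_univ]
  have eq_of_tendsto : ∀ {l : Filter ℝ} {z : X}, MapClusterPt y l g → Tendsto g l (𝓝 z) → y = z :=
    fun h hz => eq_of_nhds_neBot (ClusterPt.mono h hz).neBot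
  have exists_mem : ∀ {s : Set ℝ}, MapClusterPt y (𝓝[s] t) g → s.Nonempty := fun h =>
    (h.neBot.mono inf_le_right).of_map.nonempty_of_mem self_mem_nhdsWithin
  rw [MapClusterPt, hsplit, Filter.map_sup, clusterPt_sup] at ht
  rcases ht with hl | hr
  · obtain ⟨s, ⟨has, -⟩, hst⟩ := exists_mem hl
    have hgt : y = g t := eq_of_tendsto hl <|
      ((continuousWithinAt_Iio_iff_Iic.1 (hleft t ⟨has.trans_le hst, htb⟩)).mono
        inter_subset_right)
    rcases htb.eq_or_lt with rfl | htb
    · exact .inl hgt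
    · exact absurd ⟨t, ⟨has.trans_le hst, htb⟩, hgt.symm⟩ hy'
  · obtain ⟨s, ⟨-, hsb⟩, hts⟩ := exists_mem hr
    obtain ⟨l, hl⟩ := hright t ⟨hat, hts.trans hsb⟩
    have hyl : y = limUnder (𝓝[>] t) g :=
      (eq_of_tendsto hr (hl.mono_left (nhdsWithin_mono _ inter_subset_right))).trans
        hl.limUnder_eq.symm
    refine .inr ⟨t, ?_, hyl.symm⟩
    by_contra htT
    rw [mem_insert_iff, not_or] at htT
    have htab : t ∈ Ioo a b := ⟨hat.lt_of_ne (Ne.symm htT.1), hts.trans hsb⟩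
    exact hy' ⟨t, htab, (eq_of_tendsto hr ((hcont t htab htT.2).mono inter_subset_right)).symm⟩

lemma eventually_forall_natCast_lt {f : ℝ → ℝ} {t₀ : ℝ} (hf : ContinuousAt f t₀) :
    ∀ᶠ t in 𝓝 t₀, ∀ n : ℕ, (n : ℝ) < f t₀ → (n : ℝ) < f t := by
  have hfin : {n : ℕ | (n : ℝ) < f t₀}.Finite :=
    (finite_Iic ⌊f t₀⌋₊).subset fun n hn => Nat.le_floor (le_of_lt hn)
  exact (eventually_all_finite hfin).2 fun n hn => hf.eventually (lt_mem_nhds hn)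

lemma eventually_forall_lt_natCast {f : ℝ → ℝ} {t₀ : ℝ} (hf : ContinuousAt f t₀) :
    ∀ᶠ t in 𝓝 t₀, ∀ n : ℕ, n ≠ 0 → f t₀ < n → f t < n := by
  filter_upwards [hf.eventually (gt_mem_nhds (Nat.lt_floor_add_one (f t₀)))] with t ht n hn hlt
  exact ht.trans_le (by exact_mod_cast Nat.succ_le_of_lt ((Nat.floor_lt' hn).2 hlt))

lemma continuousAt_inv_pow {t₀ : ℝ} (ht₀ : t₀ ≠ 0) (j : ℕ) :
    ContinuousAt (fun t : ℝ => (t ^ j)⁻¹) t₀ :=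
  (continuous_pow j).continuousAt.inv₀ (pow_ne_zero j ht₀)

lemma inv_pow_le_inv_pow {t t' : ℝ} (ht : 0 < t) (htt' : t ≤ t') (j : ℕ) :
    (t' ^ j)⁻¹ ≤ (t ^ j)⁻¹ :=
  inv_anti₀ (pow_pos ht j) (pow_le_pow_left₀ ht.le htt' j)

lemma inv_pow_lt_inv_pow {t t' : ℝ} (ht : 0 < t) (htt' : t < t') {j : ℕ} (hj : j ≠ 0) :
    (t' ^ j)⁻¹ < (t ^ j)⁻¹ :=
  inv_strictAnti₀ (pow_pos ht j) (pow_lt_pow_left₀ htt' ht.le hj)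

lemma bddAbove_primes_le (s : ℝ) : BddAbove {p : ℕ | p.Prime ∧ (p : ℝ) ≤ s} :=
  ⟨⌊s⌋₊, fun _ hp => Nat.le_floor hp.2⟩

lemma le_ee {t : ℝ} {j p : ℕ} (hp : p.Prime) (hpt : (p : ℝ) ≤ (t ^ j)⁻¹) : p ≤ ee t j := by
  have h2 : (2 : ℝ) ≤ (t ^ j)⁻¹ := le_trans (by exact_mod_cast hp.two_le) hpt
  rw [ee, if_pos h2]
  exact le_csSup (bddAbove_primes_le _) ⟨hp, hpt⟩

lemma two_le_ee (t : ℝ) (j : ℕ) : 2 ≤ ee t j := by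
  by_cases h2 : (2 : ℝ) ≤ (t ^ j)⁻¹
  · exact le_ee Nat.prime_two (by exact_mod_cast h2)
  · rw [ee, if_neg h2]

lemma ee_eq_of_forall_prime_le_iff {t t' : ℝ} {j : ℕ}
    (h : ∀ p : ℕ, p.Prime → ((p : ℝ) ≤ (t ^ j)⁻¹ ↔ (p : ℝ) ≤ (t' ^ j)⁻¹)) : ee t j = ee t' j := by
  have h2 : (2 : ℝ) ≤ (t ^ j)⁻¹ ↔ (2 : ℝ) ≤ (t' ^ j)⁻¹ := by exact_mod_cast h 2 Nat.prime_two
  have hset : {p : ℕ | p.Prime ∧ (p : ℝ) ≤ (t ^ j)⁻¹} = {p : ℕ | p.Prime ∧ (p : ℝ) ≤ (t' ^ j)⁻¹} :=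
    ext fun p => and_congr_right (h p)
  rw [ee, ee, hset]
  exact if_congr h2 rfl rfl

lemma eventually_ee_eq_nhdsLT {t₀ : ℝ} (ht₀ : 0 < t₀) (j : ℕ) :
    ∀ᶠ t in 𝓝[<] t₀, ee t j = ee t₀ j := by
  filter_upwards [nhdsWithin_le_nhds
      (eventually_forall_lt_natCast (continuousAt_inv_pow ht₀.ne' j)),
    Ioo_mem_nhdsLT ht₀] with t hnat ⟨ht, htt₀⟩
  refine ee_eq_of_forall_prime_le_iff fun p hp => ⟨fun hpt => ?_, fun hpt =>
    hpt.trans (inv_pow_le_inv_pow ht htt₀.le j)⟩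
  by_contra! hlt
  exact (hnat p hp.ne_zero hlt).not_ge hpt

lemma exists_eventually_ee_eq_nhdsGT {t₀ : ℝ} (ht₀ : 0 < t₀) (j : ℕ) :
    ∃ v, ∀ᶠ t in 𝓝[>] t₀, ee t j = v := by
  have hprimes : ∀ᶠ t in 𝓝[>] t₀,
      ∀ p : ℕ, p.Prime → ((p : ℝ) ≤ (t ^ j)⁻¹ ↔ (p : ℝ) < (t₀ ^ j)⁻¹) := by
    filter_upwards [nhdsWithin_le_nhds
      (eventually_forall_natCast_lt (continuousAt_inv_pow ht₀.ne' j)),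
      self_mem_nhdsWithin] with t hnat (htt₀ : t₀ < t) p hp
    refine ⟨fun hpt => ?_, fun hlt => (hnat p hlt).le⟩
    rcases eq_or_ne j 0 with rfl | hj
    · simp only [pow_zero, inv_one] at hpt
      exact absurd hpt (by exact_mod_cast hp.one_lt.not_ge)
    · exact hpt.trans_lt (inv_pow_lt_inv_pow ht₀ htt₀ hj)
  obtain ⟨t₁, ht₁⟩ := hprimes.exists
  exact ⟨ee t₁ j, hprimes.mono fun t ht =>
    ee_eq_of_forall_prime_le_iff fun p hp => (ht p hp).trans (ht₁ p hp).symm⟩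

lemma eventually_ee_eq_nhdsGT {t₀ : ℝ} (ht₀ : 0 < t₀) {j : ℕ}
    (hj : ∀ p : ℕ, p.Prime → (t₀ ^ j)⁻¹ ≠ p) : ∀ᶠ t in 𝓝[>] t₀, ee t j = ee t₀ j := by
  filter_upwards [nhdsWithin_le_nhds
      (eventually_forall_natCast_lt (continuousAt_inv_pow ht₀.ne' j)),
    self_mem_nhdsWithin] with t hnat (htt₀ : t₀ < t)
  exact ee_eq_of_forall_prime_le_iff fun p hp =>
    ⟨fun hpt => hpt.trans (inv_pow_le_inv_pow ht₀ htt₀.le j),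
      fun hpt => (hnat p (hpt.lt_of_ne (hj p hp).symm)).le⟩

lemma tendsto_ee_one_nhdsGT_zero : Tendsto (fun t => ee t 1) (𝓝[>] 0) atTop := by
  refine tendsto_atTop.2 fun n => ?_
  obtain ⟨p, hnp, hp⟩ := Nat.exists_infinite_primes n
  have hp0 : (0 : ℝ) < p := by exact_mod_cast hp.pos
  filter_upwards [Ioo_mem_nhdsGT (inv_pos.2 hp0)] with t ⟨ht, htp⟩
  refine hnp.trans (le_ee hp ?_)
  rw [pow_one]
  exact (le_inv_comm₀ hp0 ht).2 htp.le

/-- The paper's exceptional set `S = {p ^ (-1 / j)}`. -/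
def invPrimeRoots : Set ℝ := {t | 0 < t ∧ ∃ j ≠ 0, ∃ p : ℕ, p.Prime ∧ (t ^ j)⁻¹ = p}

lemma countable_invPrimeRoots : invPrimeRoots.Countable := by
  refine (countable_iUnion fun j : ℕ => countable_iUnion fun p : ℕ =>
    Subsingleton.countable (s := {t : ℝ | 0 < t ∧ j ≠ 0 ∧ (t ^ j)⁻¹ = p}) ?_).mono ?_
  · rintro t ⟨ht, hj, htp⟩ t' ⟨ht', -, ht'p⟩
    exact (pow_left_inj₀ ht.le ht'.le hj).1 (inv_injective (htp.trans ht'p.symm))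
  · rintro t ⟨ht, j, hj, p, -, htp⟩
    exact mem_iUnion₂.2 ⟨j, p, ht, hj, htp⟩

lemma tendsto_ee_nhdsLT {t₀ : ℝ} (ht₀ : 0 < t₀) : Tendsto ee (𝓝[<] t₀) (𝓝 (ee t₀)) :=
  tendsto_pi_nhds.2 fun j => by
    rw [nhds_discrete, tendsto_pure]
    exact eventually_ee_eq_nhdsLT ht₀ j

lemma exists_tendsto_ee_nhdsGT {t₀ : ℝ} (ht₀ : 0 < t₀) : ∃ d, Tendsto ee (𝓝[>] t₀) (𝓝 d) := by
  choose d hd using exists_eventually_ee_eq_nhdsGT ht₀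
  refine ⟨d, tendsto_pi_nhds.2 fun j => ?_⟩
  rw [nhds_discrete, tendsto_pure]
  exact hd j

lemma tendsto_ee_nhdsGT {t₀ : ℝ} (ht₀ : 0 < t₀) (hS : t₀ ∉ invPrimeRoots) :
    Tendsto ee (𝓝[>] t₀) (𝓝 (ee t₀)) := by
  refine tendsto_pi_nhds.2 fun j => ?_
  rw [nhds_discrete, tendsto_pure]
  refine eventually_ee_eq_nhdsGT ht₀ fun p hp hpt => ?_
  rcases eq_or_ne j 0 with rfl | hj
  · rw [pow_zero, inv_one] at hpt
    exact hp.one_lt.ne (by exact_mod_cast hpt)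
  · exact hS ⟨ht₀, j, hj, p, hp, hpt⟩

section Series

variable {E : Type*} [NormedAddCommGroup E] [NormedSpace ℝ E] {x : ℕ → E}

noncomputable def seriesTerm (x : ℕ → E) (c : ℕ → ℕ) (u : ℕ) : E :=
  if 1 ≤ u then ((2 : ℝ) ^ (∏ i ∈ Finset.Icc 1 u, c i))⁻¹ • x (∏ i ∈ Finset.Icc 1 u, c i) else 0

lemma norm_two_pow_inv_smul_le (hx : ∀ n, ‖x n‖ ≤ 1) (N : ℕ) :
    ‖((2 : ℝ) ^ N)⁻¹ • x N‖ ≤ 2⁻¹ ^ N := by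
  rw [norm_smul, norm_inv, norm_pow, Real.norm_two, inv_pow]
  exact mul_le_of_le_one_right (by positivity) (hx N)

lemma tendsto_two_pow_inv_smul (hx : ∀ n, ‖x n‖ ≤ 1) :
    Tendsto (fun N => ((2 : ℝ) ^ N)⁻¹ • x N) atTop (𝓝 0) :=
  squeeze_zero_norm (norm_two_pow_inv_smul_le hx)
    (tendsto_pow_atTop_nhds_zero_of_lt_one (by norm_num) (by norm_num))

lemma le_prod_Icc_of_two_le {c : ℕ → ℕ} (hc : ∀ i, 2 ≤ c i) (u : ℕ) :
    u ≤ ∏ i ∈ Finset.Icc 1 u, c i :=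
  calc u ≤ 2 ^ u := Nat.lt_two_pow_self.le
    _ = ∏ _i ∈ Finset.Icc 1 u, 2 := by simp
    _ ≤ ∏ i ∈ Finset.Icc 1 u, c i := Finset.prod_le_prod' fun i _ => hc i

lemma norm_seriesTerm_le (hx : ∀ n, ‖x n‖ ≤ 1) {c : ℕ → ℕ} (hc : ∀ i, 2 ≤ c i) (u : ℕ) :
    ‖seriesTerm x c u‖ ≤ 2⁻¹ ^ u := by
  unfold seriesTerm
  split_ifs
  · exact (norm_two_pow_inv_smul_le hx _).trans
      (pow_le_pow_of_le_one (by norm_num) (by norm_num) (le_prod_Icc_of_two_le hc u))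
  · rw [norm_zero]
    positivity

lemma continuous_seriesTerm (x : ℕ → E) (u : ℕ) : Continuous fun c : ℕ → ℕ => seriesTerm x c u := by
  have hprod : Continuous fun c : ℕ → ℕ => ∏ i ∈ Finset.Icc 1 u, c i :=
    continuous_finsetProd _ fun i _ => continuous_apply i
  unfold seriesTerm
  split_ifs
  · exact (continuous_of_discreteTopology (f := fun N : ℕ => ((2 : ℝ) ^ N)⁻¹ • x N)).comp hprod
  · exact continuous_const

variable [CompleteSpace E]

lemma tendsto_tsum_seriesTerm {α : Type*} {l : Filter α} (hx : ∀ n, ‖x n‖ ≤ 1)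
    {c : α → ℕ → ℕ} (hc : ∀ a i, 2 ≤ c a i) {d : ℕ → ℕ} (hcd : Tendsto c l (𝓝 d)) :
    Tendsto (fun a => ∑' u, seriesTerm x (c a) u) l (𝓝 (∑' u, seriesTerm x d u)) :=
  tendsto_tsum_of_dominated_convergence (summable_geometric_of_lt_one (by norm_num) (by norm_num))
    (fun u => ((continuous_seriesTerm x u).tendsto d).comp hcd)
    (Eventually.of_forall fun a => norm_seriesTerm_le hx (hc a))

lemma tendsto_tsum_seriesTerm_zero {α : Type*} {l : Filter α} (hx : ∀ n, ‖x n‖ ≤ 1)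
    {c : α → ℕ → ℕ} (hc : ∀ a i, 2 ≤ c a i) (hc₁ : Tendsto (fun a => c a 1) l atTop) :
    Tendsto (fun a => ∑' u, seriesTerm x (c a) u) l (𝓝 0) := by
  have hterm (u : ℕ) : Tendsto (fun a => seriesTerm x (c a) u) l (𝓝 0) := by
    unfold seriesTerm
    split_ifs with hu
    · refine (tendsto_two_pow_inv_smul hx).comp (tendsto_atTop_mono (fun a => ?_) hc₁)
      exact Finset.single_le_prod' (fun i _ => (hc a i).trans' one_le_two)
        (Finset.mem_Icc.2 ⟨le_rfl, hu⟩)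
    · exact tendsto_const_nhds
  simpa using tendsto_tsum_of_dominated_convergence
    (summable_geometric_of_lt_one (by norm_num) (by norm_num)) hterm
    (Eventually.of_forall fun a => norm_seriesTerm_le hx (hc a))

end Series

section PaperMapExt

variable {E : Type*} [NormedAddCommGroup E] [NormedSpace ℝ E] {x : ℕ → E}

noncomputable def paperMapExt (x : ℕ → E) (t : ℝ) : E := ∑' u, seriesTerm x (ee t) u

lemma range_paperMap (x : ℕ → E) : range (paperMap x) = paperMapExt x '' Ioo 0 1 := by
  rw [show paperMap x = paperMapExt x ∘ Subtype.val from rfl, range_comp, Subtype.range_coe]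

variable [CompleteSpace E]

lemma continuousWithinAt_paperMapExt_Iio (hx : ∀ n, ‖x n‖ ≤ 1) {t₀ : ℝ} (ht₀ : 0 < t₀) :
    ContinuousWithinAt (paperMapExt x) (Iio t₀) t₀ :=
  tendsto_tsum_seriesTerm hx (fun t => two_le_ee t) (tendsto_ee_nhdsLT ht₀)

lemma continuousWithinAt_paperMapExt_Ioi (hx : ∀ n, ‖x n‖ ≤ 1) {t₀ : ℝ} (ht₀ : 0 < t₀)
    (hS : t₀ ∉ invPrimeRoots) : ContinuousWithinAt (paperMapExt x) (Ioi t₀) t₀ :=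
  tendsto_tsum_seriesTerm hx (fun t => two_le_ee t) (tendsto_ee_nhdsGT ht₀ hS)

lemma exists_tendsto_paperMapExt_nhdsGT (hx : ∀ n, ‖x n‖ ≤ 1) {t₀ : ℝ} (ht₀ : 0 ≤ t₀) :
    ∃ l, Tendsto (paperMapExt x) (𝓝[>] t₀) (𝓝 l) := by
  rcases ht₀.eq_or_lt with rfl | ht₀
  · exact ⟨0, tendsto_tsum_seriesTerm_zero hx (fun t => two_le_ee t) tendsto_ee_one_nhdsGT_zero⟩
  · obtain ⟨d, hd⟩ := exists_tendsto_ee_nhdsGT ht₀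
    exact ⟨_, tendsto_tsum_seriesTerm hx (fun t => two_le_ee t) hd⟩

end PaperMapExt

lemma measurableSet_of_countable_closure_diff {α : Type*} [TopologicalSpace α] [MeasurableSpace α]
    [OpensMeasurableSpace α] [MeasurableSingletonClass α] {s : Set α}
    (h : (closure s \ s).Countable) : MeasurableSet s := by
  rw [← sdiff_sdiff_cancel_left (subset_closure (s := s))]
  exact isClosed_closure.measurableSet.diff h.measurableSet

theorem range_closure_diff_countable_general (E : Type*)
    [NormedAddCommGroup E] [NormedSpace ℝ E] [CompleteSpace E]
    [MeasurableSpace E] [BorelSpace E]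
    (x : ℕ → E) (hx : ∀ n, ‖x n‖ = 1) :
    (closure (Set.range (paperMap x)) \ Set.range (paperMap x)).Countable ∧
    MeasurableSet (Set.range (paperMap x)) := by
  have hx' : ∀ n, ‖x n‖ ≤ 1 := fun n => (hx n).le
  have hdiff : (closure (range (paperMap x)) \ range (paperMap x)).Countable := by
    rw [range_paperMap]
    exact (((countable_invPrimeRoots.insert 0).image _).insert _).mono
      (closure_image_Ioo_diff_subset (fun t ht => continuousWithinAt_paperMapExt_Iio hx' ht.1)
        (fun t ht => exists_tendsto_paperMapExt_nhdsGT hx' ht.1)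
        (fun t ht hS => continuousWithinAt_paperMapExt_Ioi hx' ht.1 hS))
  exact ⟨hdiff, measurableSet_of_countable_closure_diff hdiff⟩

theorem range_closure_diff_countable (E : Type*)
    [NormedAddCommGroup E] [NormedSpace ℝ E] [CompleteSpace E]
    [MeasurableSpace E] [BorelSpace E]
    (x : ℕ → E) (hx : ∀ n, ‖x n‖ = 1)
    (f : ℕ → (E →L[ℝ] ℝ))
    (hfo : ∀ u v, u ≠ v → f v (x u) = 0) (hfd : ∀ u, f u (x u) ≠ 0) :
    (closure (Set.range (paperMap x)) \ Set.range (paperMap x)).Countable ∧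
    MeasurableSet (Set.range (paperMap x)) :=
  range_closure_diff_countable_general E x hx
end
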